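/- For t ≥ 1, with E_i the subspace of F_q^{n₁+⋯+n_t} spanned by the last n_i+⋯+n_t standard basis vectors (2 ≤ i ≤ t), the set of subspaces P with dim P = k₁ and dim(P ∩ E_i) = k_i for all 2 ≤ i ≤ t is non-empty if and only if 0 ≤ k_i − k_{i+1} ≤ n_i for 1 ≤ i ≤ t−1 and 0 ≤ k_t ≤ n_t; in that case its cardinality equals [n_t choose k_t]_q · ∏_{j=1}^{t−1} q^{(k_j−k_{j+1})(n_{j+1}+⋯+n_t−k_{j+1})} [n_j choose k_j−k_{j+1}]_q. -/

import Mathlib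

/-- Gaussian binomial coefficient, via the q-Pascal recursion. -/
def gaussBinom (q : ℕ) : ℕ → ℕ → ℕ
  | _, 0 => 1
  | 0, _ + 1 => 0
  | m + 1, i + 1 => gaussBinom q m i + q ^ (i + 1) * gaussBinom q m (i + 1)

/-- The subspace of `F^N` spanned by the standard basis vectors `e_j` with `c ≤ j`
(0-indexed), i.e. by the last `N - c` standard basis vectors. -/
def lastSpan (F : Type) [Field F] (N c : ℕ) : Submodule F (Fin N → F) :=
  Submodule.span F {v | ∃ j : Fin N, c ≤ (j : ℕ) ∧ v = Pi.single j 1}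

/-- `P` is a subspace of type `(k 0, k 1, …, k (t-1))` of `F_q^{n 0 + ⋯ + n (t-1)}`:
`dim P = k 0` and `dim (P ⊓ E_i) = k i` for `1 ≤ i ≤ t - 1`, where `E_i` is spanned by
the last `n i + ⋯ + n (t-1)` standard basis vectors. -/
def IsTypeP (F : Type) [Field F] (t : ℕ) (n k : ℕ → ℕ)
    (P : Submodule F (Fin (∑ m ∈ Finset.range t, n m) → F)) : Prop :=
  Module.finrank F P = k 0 ∧
    ∀ i, 1 ≤ i → i < t →
      Module.finrank F
        ↥(P ⊓ lastSpan F (∑ m ∈ Finset.range t, n m) (∑ j ∈ Finset.range i, n j)) = k i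

/-!
Fibre the subspaces `P ≤ E 0` of a given type with respect to a flag `E` over `P' = P ⊓ E 1`.
In `V ⧸ P'` such a `P` becomes a subspace of dimension `k 0 - k 1` meeting `E 1 ⧸ P'` trivially,
that is, the graph of a linear map into `E 1 ⧸ P'` defined on a subspace of a complement of
`E 1 ⧸ P'`. Hence every fibre has
`q ^ ((k 0 - k 1) * (dim E 1 - k 1)) * [dim E 0 - dim E 1, k 0 - k 1]_q` elements, and
induction along the flag gives the product, which ends with the Grassmannian of the last `E i`.
The Grassmannian count obeys the q-Pascal recursion: split according to whether the subspace
contains a fixed nonzero vector.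
-/

open Module Submodule

theorem gaussBinom_zero_right (q n : ℕ) : gaussBinom q n 0 = 1 := by
  cases n <;> rfl

theorem gaussBinom_eq_zero_of_lt (q : ℕ) {n k : ℕ} (h : n < k) : gaussBinom q n k = 0 := by
  induction n generalizing k with
  | zero => obtain ⟨k, rfl⟩ := Nat.exists_eq_succ_of_ne_zero (by omega : k ≠ 0); rfl
  | succ m ih =>
    obtain ⟨k, rfl⟩ := Nat.exists_eq_succ_of_ne_zero (by omega : k ≠ 0)
    simp only [gaussBinom, ih (by omega : m < k), ih (by omega : m < k + 1), mul_zero, add_zero]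

theorem gaussBinom_pos (q : ℕ) {n k : ℕ} (h : k ≤ n) : 0 < gaussBinom q n k := by
  induction n generalizing k with
  | zero => simp [Nat.le_zero.1 h, gaussBinom_zero_right]
  | succ m ih =>
    cases k with
    | zero => simp [gaussBinom_zero_right]
    | succ k => exact Nat.add_pos_left (ih (by omega)) _

theorem Nat.card_eq_mul_of_card_fiber {α β : Type*} [Finite α] [Finite β] (f : α → β) {c : ℕ}
    (h : ∀ b, Nat.card {a // f a = b} = c) : Nat.card α = Nat.card β * c := by
  have := Fintype.ofFinite β
  rw [← Nat.card_congr (Equiv.sigmaFiberEquiv f), Nat.card_sigma]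
  simp [h, Nat.card_eq_fintype_card]

theorem Nat.card_eq_card_and_add_card_and_not {α : Type*} [Finite α] (q p : α → Prop) :
    Nat.card {x // p x} = Nat.card {x // q x ∧ p x} + Nat.card {x // ¬ q x ∧ p x} := by
  classical
  rw [← Nat.card_sum]
  exact Nat.card_congr <| (Equiv.sumCompl fun x : {x // p x} => q x).symm.trans <|
    Equiv.sumCongr ((Equiv.subtypeSubtypeEquivSubtypeInter p q).trans (Equiv.subtypeEquivRight
      fun _ => and_comm)) ((Equiv.subtypeSubtypeEquivSubtypeInter p (¬ q ·)).trans
      (Equiv.subtypeEquivRight fun _ => and_comm))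

section
variable {F : Type*} [Field F] {V W : Type*} [AddCommGroup V] [Module F V] [AddCommGroup W]
  [Module F W]

theorem Submodule.finrank_map_add_finrank_inf_ker [FiniteDimensional F V] (f : V →ₗ[F] W)
    (U : Submodule F V) : finrank F (U.map f) + finrank F ↥(U ⊓ LinearMap.ker f) = finrank F U := by
  have h := LinearMap.finrank_range_add_finrank_ker (f.domRestrict U)
  rwa [LinearMap.range_domRestrict, LinearMap.ker_domRestrict, ← finrank_map_subtype_eq,
    map_comap_subtype] at h

theorem Submodule.finrank_comap_mkQ [FiniteDimensional F V] (E : Submodule F V)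
    (W : Submodule F (V ⧸ E)) : finrank F (W.comap E.mkQ) = finrank F W + finrank F E := by
  rw [← (W.comap E.mkQ).finrank_map_add_finrank_inf_ker E.mkQ,
    map_comap_eq_of_surjective E.mkQ_surjective, ker_mkQ, inf_eq_right.2 (le_comap_mkQ E W)]

theorem Submodule.finrank_inf_sub_finrank_inf_le [FiniteDimensional F V] {A B : Submodule F V}
    (h : B ≤ A) (P : Submodule F V) :
    finrank F ↥(P ⊓ A) - finrank F ↥(P ⊓ B) ≤ finrank F A - finrank F B := by
  have hsum := finrank_sup_add_finrank_inf_eq (P ⊓ A) B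
  rw [inf_assoc, inf_eq_right.2 h] at hsum
  have hsup := finrank_mono (sup_le (inf_le_right : P ⊓ A ≤ A) h)
  omega

theorem Submodule.comap_mkQ_inf_eq_iff {P' E : Submodule F V} (h : P' ≤ E)
    (W : Submodule F (V ⧸ P')) : W.comap P'.mkQ ⊓ E = P' ↔ W ⊓ E.map P'.mkQ = ⊥ := by
  have hcomap : (W ⊓ E.map P'.mkQ).comap P'.mkQ = W.comap P'.mkQ ⊓ E := by
    rw [comap_inf, comap_map_mkQ, sup_eq_right.2 h]
  rw [← hcomap, ← (comap_injective_of_surjective P'.mkQ_surjective).eq_iff, comap_bot, ker_mkQ]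

theorem Submodule.map_subtype_inf_eq_iff {P' E A : Submodule F V} (hP' : P' ≤ A)
    (Q : Submodule F A) :
    Q.map A.subtype ⊓ E = P' ↔ Q ⊓ E.comap A.subtype = P'.comap A.subtype := by
  have hmap : (Q ⊓ E.comap A.subtype).map A.subtype = Q.map A.subtype ⊓ E := by
    rw [map_inf _ A.injective_subtype, map_comap_subtype, ← inf_assoc,
      inf_eq_left.2 (map_subtype_le A Q)]
  rw [← hmap, ← (map_injective_of_injective A.injective_subtype).eq_iff, map_comap_subtype,
    inf_eq_right.2 hP']

theorem Submodule.natCard_subtype_congr (e : V ≃ₗ[F] W) (p : Submodule F V → Prop)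
    (p' : Submodule F W → Prop) (h : ∀ U, p U ↔ p' (U.map (e : V →ₗ[F] W))) :
    Nat.card {U // p U} = Nat.card {U // p' U} :=
  Nat.card_congr ((orderIsoMapComap e).toEquiv.subtypeEquiv h)

theorem Submodule.natCard_le_and (A : Submodule F V) (p : Submodule F V → Prop) :
    Nat.card {P // P ≤ A ∧ p P} = Nat.card {Q : Submodule F A // p (Q.map A.subtype)} :=
  Nat.card_congr <| (Equiv.subtypeSubtypeEquivSubtypeInter (· ≤ A) p).symm.trans <|
    ((MapSubtype.orderIso A).toEquiv.subtypeEquiv fun _ => Iff.rfl).symm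

theorem Submodule.natCard_ge_and (E : Submodule F V) (p : Submodule F V → Prop) :
    Nat.card {P // E ≤ P ∧ p P} = Nat.card {U : Submodule F (V ⧸ E) // p (U.comap E.mkQ)} :=
  Nat.card_congr <| (Equiv.subtypeSubtypeEquivSubtypeInter (E ≤ ·) p).symm.trans <|
    ((comapMkQRelIso E).toEquiv.subtypeEquiv fun _ => Iff.rfl).symm

end

section
variable {F : Type*} [Field F] {C E : Type*} [AddCommGroup C] [Module F C]
  [AddCommGroup E] [Module F E]

noncomputable def Submodule.graphEquivLinearPMap :
    {U : Submodule F (C × E) // ∀ x ∈ U, x.1 = 0 → x.2 = 0} ≃ (C →ₗ.[F] E) where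
  toFun U := U.1.toLinearPMap
  invFun f := ⟨f.graph, fun _ hx hx1 => f.graph_fst_eq_zero_snd hx hx1⟩
  left_inv U := Subtype.ext (U.1.toLinearPMap_graph_eq U.2)
  right_inv f := LinearPMap.eq_of_eq_graph (f.graph.toLinearPMap_graph_eq
    fun _ hx hx1 => f.graph_fst_eq_zero_snd hx hx1)

theorem Submodule.finrank_toLinearPMap_domain [FiniteDimensional F C] [FiniteDimensional F E]
    {U : Submodule F (C × E)} (hU : ∀ x ∈ U, x.1 = 0 → x.2 = 0) :
    finrank F U.toLinearPMap.domain = finrank F U := by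
  have hker : U ⊓ LinearMap.ker (LinearMap.fst F C E) = ⊥ :=
    eq_bot_iff.2 fun x ⟨hxU, hx1⟩ => Prod.ext hx1 (hU x hxU hx1)
  rw [← U.finrank_map_add_finrank_inf_ker (LinearMap.fst F C E), hker, finrank_bot, add_zero]
  rfl

theorem Submodule.natCard_graph_finrank_eq [Finite F] [FiniteDimensional F C]
    [FiniteDimensional F E] (r : ℕ) :
    Nat.card {U : Submodule F (C × E) // (∀ x ∈ U, x.1 = 0 → x.2 = 0) ∧ finrank F U = r} =
      Nat.card {W : Submodule F C // finrank F W = r} * Nat.card F ^ (r * finrank F E) := by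
  have : Finite C := Module.finite_of_finite F
  have : Fintype {W : Submodule F C // finrank F W = r} := Fintype.ofFinite _
  have : ∀ W : Submodule F C, Finite (W →ₗ[F] E) := fun _ => Module.finite_of_finite F
  calc _ = Nat.card {f : C →ₗ.[F] E // finrank F f.domain = r} := by
        refine Nat.card_congr ((Equiv.subtypeSubtypeEquivSubtypeInter _ _).symm.trans
          (graphEquivLinearPMap.subtypeEquiv fun U => ?_))
        rw [← finrank_toLinearPMap_domain U.2]
        rfl
    _ = Nat.card (Σ W : {W : Submodule F C // finrank F W = r}, W.1 →ₗ[F] E) :=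
        Nat.card_congr
          { toFun f := ⟨⟨f.1.domain, f.2⟩, f.1.toFun⟩
            invFun p := ⟨⟨p.1.1, p.2⟩, p.1.2⟩ }
    _ = _ := by
        rw [Nat.card_sigma, Finset.sum_congr rfl fun W _ => by
          rw [Module.natCard_eq_pow_finrank (K := F), finrank_linearMap, W.2],
          Finset.sum_const, smul_eq_mul, Finset.card_univ, ← Nat.card_eq_fintype_card]

end

section
variable {F : Type*} [Field F] {V : Type*} [AddCommGroup V] [Module F V] [FiniteDimensional F V]

theorem Submodule.natCard_finrank_eq_zero :
    Nat.card {U : Submodule F V // finrank F U = 0} = 1 := by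
  simp only [Submodule.finrank_eq_zero]
  exact Nat.card_unique

variable [Finite F]

theorem Submodule.natCard_inf_eq_bot_finrank_eq {C E : Submodule F V} (h : IsCompl C E) (r : ℕ) :
    Nat.card {U : Submodule F V // U ⊓ E = ⊥ ∧ finrank F U = r} =
      Nat.card {W : Submodule F C // finrank F W = r} * Nat.card F ^ (r * finrank F E) := by
  rw [← natCard_graph_finrank_eq]
  refine natCard_subtype_congr (prodEquivOfIsCompl C E h).symm _ _ fun U => ?_
  rw [LinearEquiv.finrank_map_eq, ← disjoint_iff, disjoint_def]
  refine and_congr_left' ⟨fun hU x hx hx1 => ?_, fun hU v hvU hvE => ?_⟩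
  · obtain ⟨v, hvU, rfl⟩ := mem_map.1 hx
    simp [hU v hvU ((prodEquivOfIsCompl_symm_apply_fst_eq_zero C E h).1 hx1)]
  · have hv1 := (prodEquivOfIsCompl_symm_apply_fst_eq_zero C E h).2 hvE
    have hv2 := hU _ (mem_map_of_mem hvU) hv1
    exact (prodEquivOfIsCompl C E h).symm.map_eq_zero_iff.1 (Prod.ext hv1 hv2)

theorem Submodule.natCard_finrank_eq (k : ℕ) :
    Nat.card {U : Submodule F V // finrank F U = k} = gaussBinom (Nat.card F) (finrank F V) k := by
  obtain ⟨n, hn⟩ : ∃ n, finrank F V = n := ⟨_, rfl⟩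
  rw [hn]
  induction n generalizing V k with
  | zero =>
    cases k with
    | zero => rw [natCard_finrank_eq_zero, gaussBinom_zero_right]
    | succ j =>
      rw [gaussBinom_eq_zero_of_lt _ j.succ_pos, Nat.card_eq_zero]
      exact Or.inl ⟨fun U => by have := U.1.finrank_le; omega⟩
  | succ m ih =>
    cases k with
    | zero => rw [natCard_finrank_eq_zero, gaussBinom_zero_right]
    | succ j =>
      have : Finite V := Module.finite_of_finite F
      have : Nontrivial V := Module.nontrivial_of_finrank_pos (R := F) (by omega)
      obtain ⟨v, hv⟩ := exists_ne (0 : V)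
      obtain ⟨C, hC⟩ := (F ∙ v).exists_isCompl
      have hL : finrank F (F ∙ v) = 1 := finrank_span_singleton hv
      have hCm : finrank F C = m := by
        have := Submodule.finrank_add_eq_of_isCompl hC
        omega
      have hVL : finrank F (V ⧸ F ∙ v) = m := by
        have := (F ∙ v).finrank_quotient_add_finrank
        omega
      have hcontains : Nat.card {U : Submodule F V // v ∈ U ∧ finrank F U = j + 1} =
          gaussBinom (Nat.card F) m j := by
        simp only [← span_singleton_le_iff_mem]
        rw [natCard_ge_and, ← ih j hVL]
        simp only [finrank_comap_mkQ, hL, Nat.add_right_cancel_iff]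
      have hmisses : Nat.card {U : Submodule F V // v ∉ U ∧ finrank F U = j + 1} =
          Nat.card F ^ (j + 1) * gaussBinom (Nat.card F) m (j + 1) := by
        simp only [← disjoint_span_singleton' hv, disjoint_iff]
        rw [natCard_inf_eq_bot_finrank_eq hC.symm, ih (j + 1) hCm, hL, mul_one, mul_comm]
      rw [Nat.card_eq_card_and_add_card_and_not (v ∈ ·), hcontains, hmisses]
      rfl

theorem Submodule.natCard_le_finrank_eq (A : Submodule F V) (k : ℕ) :
    Nat.card {U : Submodule F V // U ≤ A ∧ finrank F U = k} =
      gaussBinom (Nat.card F) (finrank F A) k := by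
  simp only [natCard_le_and, finrank_map_subtype_eq, natCard_finrank_eq]

theorem Submodule.natCard_inf_eq_finrank_eq {P' E : Submodule F V} (h : P' ≤ E) {d : ℕ}
    (hd : finrank F P' ≤ d) :
    Nat.card {P : Submodule F V // P ⊓ E = P' ∧ finrank F P = d} =
      gaussBinom (Nat.card F) (finrank F V - finrank F E) (d - finrank F P') *
        Nat.card F ^ ((d - finrank F P') * (finrank F E - finrank F P')) := by
  have hmapE : finrank F (E.map P'.mkQ) = finrank F E - finrank F P' := by
    have := E.finrank_map_add_finrank_inf_ker P'.mkQ
    rw [ker_mkQ, inf_eq_right.2 h] at this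
    omega
  obtain ⟨C, hC⟩ := (E.map P'.mkQ).exists_isCompl
  have hCdim : finrank F C = finrank F V - finrank F E := by
    have h1 := finrank_add_eq_of_isCompl hC
    have h2 := P'.finrank_quotient_add_finrank
    have h3 := finrank_mono h
    have h4 := E.finrank_le
    omega
  calc _ = Nat.card {P : Submodule F V // P' ≤ P ∧ P ⊓ E = P' ∧ finrank F P = d} :=
        Nat.card_congr <| Equiv.subtypeEquivRight fun P =>
          ⟨fun hP => ⟨le_of_eq_of_le hP.1.symm inf_le_left, hP⟩, And.right⟩
    _ = Nat.card {W : Submodule F (V ⧸ P') // W ⊓ E.map P'.mkQ = ⊥ ∧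
          finrank F W = d - finrank F P'} := by
        rw [natCard_ge_and]
        refine Nat.card_congr (Equiv.subtypeEquivRight fun W => ?_)
        rw [comap_mkQ_inf_eq_iff h, finrank_comap_mkQ]
        exact and_congr_right' (by omega)
    _ = _ := by
        rw [natCard_inf_eq_bot_finrank_eq hC.symm, natCard_finrank_eq, hCdim, hmapE]

theorem Submodule.natCard_le_inf_eq_finrank_eq {P' E A : Submodule F V} (hP'E : P' ≤ E)
    (hEA : E ≤ A) {d : ℕ} (hd : finrank F P' ≤ d) :
    Nat.card {P : Submodule F V // P ≤ A ∧ P ⊓ E = P' ∧ finrank F P = d} =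
      gaussBinom (Nat.card F) (finrank F A - finrank F E) (d - finrank F P') *
        Nat.card F ^ ((d - finrank F P') * (finrank F E - finrank F P')) := by
  have hE : finrank F (E.comap A.subtype) = finrank F E := (comapSubtypeEquivOfLe hEA).finrank_eq
  have hP' : finrank F (P'.comap A.subtype) = finrank F P' :=
    (comapSubtypeEquivOfLe (hP'E.trans hEA)).finrank_eq
  simp only [natCard_le_and, map_subtype_inf_eq_iff (hP'E.trans hEA), finrank_map_subtype_eq]
  rw [natCard_inf_eq_finrank_eq (comap_mono hP'E) (hP' ▸ hd), hE, hP']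

theorem Submodule.natCard_flag_type {E : ℕ → Submodule F V} (hE : Antitone E) {k : ℕ → ℕ}
    {s : ℕ} (hk : ∀ i < s, k (i + 1) ≤ k i) :
    Nat.card {P : Submodule F V // P ≤ E 0 ∧ ∀ i ≤ s, finrank F ↥(P ⊓ E i) = k i} =
      gaussBinom (Nat.card F) (finrank F (E s)) (k s) *
        ∏ j ∈ Finset.range s,
          Nat.card F ^ ((k j - k (j + 1)) * (finrank F (E (j + 1)) - k (j + 1))) *
            gaussBinom (Nat.card F) (finrank F (E j) - finrank F (E (j + 1)))
              (k j - k (j + 1)) := by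
  induction s generalizing E k with
  | zero =>
    rw [Finset.prod_range_zero, mul_one, ← natCard_le_finrank_eq]
    refine Nat.card_congr (Equiv.subtypeEquivRight fun P => and_congr_right fun hP => ?_)
    simp only [Nat.le_zero, forall_eq]
    rw [inf_eq_left.2 hP]
  | succ s ih =>
    have : Finite V := Module.finite_of_finite F
    have hshift := ih (E := fun i => E (i + 1)) (k := fun i => k (i + 1))
      (fun _ _ hij => hE (by omega)) (fun i hi => hk (i + 1) (by omega))
    let π : {P : Submodule F V // P ≤ E 0 ∧ ∀ i ≤ s + 1, finrank F ↥(P ⊓ E i) = k i} →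
        {P' : Submodule F V // P' ≤ E 1 ∧ ∀ i ≤ s, finrank F ↥(P' ⊓ E (i + 1)) = k (i + 1)} :=
      fun P => ⟨P.1 ⊓ E 1, inf_le_right, fun i hi => by
        rw [inf_assoc, inf_eq_right.2 (hE (by omega))]
        exact P.2.2 (i + 1) (by omega)⟩
    have hfiber : ∀ P', Nat.card {P // π P = P'} =
        Nat.card F ^ ((k 0 - k 1) * (finrank F (E 1) - k 1)) *
          gaussBinom (Nat.card F) (finrank F (E 0) - finrank F (E 1)) (k 0 - k 1) := by
      intro P'
      have hP' : finrank F P'.1 = k 1 := by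
        have := P'.2.2 0 (Nat.zero_le _)
        rwa [inf_eq_left.2 P'.2.1] at this
      rw [mul_comm, ← hP', ← natCard_le_inf_eq_finrank_eq P'.2.1 (hE zero_le_one)
        (hP' ▸ hk 0 (by omega))]
      refine Nat.card_congr <| (Equiv.subtypeEquivRight fun P => Subtype.ext_iff).trans <|
        (Equiv.subtypeSubtypeEquivSubtypeInter _ (· ⊓ E 1 = P'.1)).trans <|
        Equiv.subtypeEquivRight fun P => ?_
      constructor
      · rintro ⟨⟨hPE, hdim⟩, hPP'⟩
        have := hdim 0 (Nat.zero_le _)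
        rw [inf_eq_left.2 hPE] at this
        exact ⟨hPE, hPP', this⟩
      · rintro ⟨hPE, hPP', hdim⟩
        refine ⟨⟨hPE, fun i hi => ?_⟩, hPP'⟩
        rcases i with _ | i
        · rwa [inf_eq_left.2 hPE]
        · rw [← inf_eq_right.2 (hE (by omega : 1 ≤ i + 1)), ← inf_assoc, hPP']
          exact P'.2.2 i (by omega)
    rw [Nat.card_eq_mul_of_card_fiber π hfiber, hshift, Finset.prod_range_succ', mul_assoc]

theorem Submodule.exists_flag_type_iff {E : ℕ → Submodule F V} (hE : Antitone E) {k : ℕ → ℕ}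
    {s : ℕ} :
    (∃ P : Submodule F V, P ≤ E 0 ∧ ∀ i ≤ s, finrank F ↥(P ⊓ E i) = k i) ↔
      (∀ i < s, k (i + 1) ≤ k i ∧ k i - k (i + 1) ≤ finrank F (E i) - finrank F (E (i + 1))) ∧
        k s ≤ finrank F (E s) := by
  constructor
  · rintro ⟨P, -, hP⟩
    refine ⟨fun i hi => ?_, hP s le_rfl ▸ finrank_mono inf_le_right⟩
    rw [← hP i hi.le, ← hP (i + 1) hi]
    exact ⟨finrank_mono (inf_le_inf_left P (hE i.le_succ)),
      finrank_inf_sub_finrank_inf_le (hE i.le_succ) P⟩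
  · rintro ⟨hk, hks⟩
    have hpos : 0 < Nat.card {P : Submodule F V // P ≤ E 0 ∧
        ∀ i ≤ s, finrank F ↥(P ⊓ E i) = k i} := by
      rw [natCard_flag_type hE fun i hi => (hk i hi).1]
      exact Nat.mul_pos (gaussBinom_pos _ hks) <| Finset.prod_pos fun j hj =>
        Nat.mul_pos (pow_pos Nat.card_pos _) (gaussBinom_pos _ (hk j (Finset.mem_range.1 hj)).2)
    obtain ⟨⟨P, hP⟩⟩ := (Nat.card_pos_iff.1 hpos).1
    exact ⟨P, hP⟩

end

section
variable (F : Type) [Field F]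

theorem lastSpan_antitone (N : ℕ) : Antitone (lastSpan F N) :=
  fun _ _ h => Submodule.span_mono fun _ ⟨j, hj, hv⟩ => ⟨j, h.trans hj, hv⟩

theorem finrank_lastSpan (N c : ℕ) : finrank F (lastSpan F N c) = N - c := by
  have hset : {v : Fin N → F | ∃ j : Fin N, c ≤ (j : ℕ) ∧ v = Pi.single j 1} =
      Set.range (Pi.basisFun F (Fin N) ∘ Subtype.val (p := fun j : Fin N => c ≤ (j : ℕ))) := by
    ext v
    simp [eq_comm]
  rw [lastSpan, hset, finrank_span_eq_card
    ((Pi.basisFun F (Fin N)).linearIndependent.comp _ Subtype.val_injective)]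
  have := Fin.card_filter_val_lt (n := N) (m := c)
  simp only [Fintype.card_subtype, ← not_lt, Finset.filter_not, Finset.card_univ_sdiff, this,
    Fintype.card_fin]
  omega

def lastSpanFlag (t : ℕ) (n : ℕ → ℕ) (i : ℕ) :
    Submodule F (Fin (∑ m ∈ Finset.range t, n m) → F) :=
  lastSpan F (∑ m ∈ Finset.range t, n m) (∑ j ∈ Finset.range i, n j)

variable {F}

theorem lastSpanFlag_antitone (t : ℕ) (n : ℕ → ℕ) : Antitone (lastSpanFlag F t n) :=
  (lastSpan_antitone F _).comp_monotone
    fun _ _ h => Finset.sum_le_sum_of_subset (Finset.range_mono h)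

theorem finrank_lastSpanFlag {t : ℕ} (n : ℕ → ℕ) {i : ℕ} (hi : i ≤ t) :
    finrank F (lastSpanFlag F t n i) = ∑ m ∈ Finset.Ico i t, n m := by
  rw [lastSpanFlag, finrank_lastSpan, ← Finset.sum_range_add_sum_Ico n hi, Nat.add_sub_cancel_left]

theorem finrank_lastSpanFlag_sub_succ {t : ℕ} (n : ℕ → ℕ) {i : ℕ} (hi : i < t) :
    finrank F (lastSpanFlag F t n i) - finrank F (lastSpanFlag F t n (i + 1)) = n i := by
  rw [finrank_lastSpanFlag n hi.le, finrank_lastSpanFlag n hi, Finset.sum_eq_sum_Ico_succ_bot hi]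
  exact Nat.add_sub_cancel _ _

theorem finrank_lastSpanFlag_last (s : ℕ) (n : ℕ → ℕ) :
    finrank F (lastSpanFlag F (s + 1) n s) = n s := by
  rw [finrank_lastSpanFlag n s.le_succ, Nat.Ico_succ_singleton, Finset.sum_singleton]

theorem lastSpanFlag_zero (t : ℕ) (n : ℕ → ℕ) : lastSpanFlag F t n 0 = ⊤ :=
  eq_top_of_finrank_eq <| by
    rw [finrank_lastSpanFlag n t.zero_le, ← Finset.range_eq_Ico, finrank_fin_fun]

theorem isTypeP_iff {s : ℕ} {n k : ℕ → ℕ}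
    (P : Submodule F (Fin (∑ m ∈ Finset.range (s + 1), n m) → F)) :
    IsTypeP F (s + 1) n k P ↔ P ≤ lastSpanFlag F (s + 1) n 0 ∧
      ∀ i ≤ s, finrank F ↥(P ⊓ lastSpanFlag F (s + 1) n i) = k i := by
  have hP : P ⊓ lastSpanFlag F (s + 1) n 0 = P := by rw [lastSpanFlag_zero, inf_top_eq]
  constructor
  · rintro ⟨h0, hrest⟩
    refine ⟨inf_eq_left.1 hP, fun i hi => ?_⟩
    rcases i with _ | i
    · rwa [hP]
    · exact hrest (i + 1) (by omega) (by omega)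
  · rintro ⟨-, h⟩
    have h0 := h 0 s.zero_le
    rw [hP] at h0
    exact ⟨h0, fun i _ hi => h i (by omega)⟩

end

/-- Existence criterion and count for subspaces of type `(k 0, …, k (t-1))`. -/
theorem stmt7 {F : Type} [Field F] [Fintype F] (q t : ℕ) (ht : 1 ≤ t) (n k : ℕ → ℕ)
    (hq : Fintype.card F = q) :
    ((∃ P, IsTypeP F t n k P) ↔
      ((∀ i < t - 1, k (i + 1) ≤ k i ∧ k i - k (i + 1) ≤ n i) ∧ k (t - 1) ≤ n (t - 1))) ∧
    (((∀ i < t - 1, k (i + 1) ≤ k i ∧ k i - k (i + 1) ≤ n i) ∧ k (t - 1) ≤ n (t - 1)) →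
      Nat.card {P // IsTypeP F t n k P} =
        gaussBinom q (n (t - 1)) (k (t - 1)) *
          ∏ j ∈ Finset.range (t - 1),
            q ^ ((k j - k (j + 1)) * ((∑ m ∈ Finset.Ico (j + 1) t, n m) - k (j + 1))) *
              gaussBinom q (n j) (k j - k (j + 1))) := by
  obtain ⟨s, rfl⟩ := Nat.exists_eq_add_of_le' ht
  simp only [Nat.add_sub_cancel]
  set E := lastSpanFlag F (s + 1) n
  have hE : Antitone E := lastSpanFlag_antitone (s + 1) n
  have hcond : ((∀ i < s, k (i + 1) ≤ k i ∧ k i - k (i + 1) ≤ n i) ∧ k s ≤ n s) ↔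
      (∀ i < s, k (i + 1) ≤ k i ∧ k i - k (i + 1) ≤ finrank F (E i) - finrank F (E (i + 1))) ∧
        k s ≤ finrank F (E s) := by
    rw [finrank_lastSpanFlag_last]
    exact and_congr_left' <| forall₂_congr fun i hi => by
      rw [finrank_lastSpanFlag_sub_succ n (by omega)]
  refine ⟨(exists_congr isTypeP_iff).trans ((Submodule.exists_flag_type_iff hE).trans hcond.symm),
    fun h => ?_⟩
  rw [Nat.card_congr (Equiv.subtypeEquivRight isTypeP_iff),
    Submodule.natCard_flag_type hE fun i hi => ((hcond.1 h).1 i hi).1, Nat.card_eq_fintype_card,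
    hq, finrank_lastSpanFlag_last]
  refine congrArg _ (Finset.prod_congr rfl fun j hj => ?_)
  have hj := Finset.mem_range.1 hj
  rw [finrank_lastSpanFlag_sub_succ n (by omega), finrank_lastSpanFlag n (by omega)]
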